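/- For odd n, the quotient ring R[x]/(x^n - 1), where R = Z4[u]/(u^2), is not a principal ideal ring: the preimage of the ideal (2,u) of R under the augmentation homomorphism sending a polynomial to the sum of its coefficients is a non-principal ideal. -/
import Mathlib

set_option maxSynthPendingDepth 3
set_option synthInstance.maxHeartbeats 400000

open DualNumber TrivSqZeroExt Polynomial

abbrev R4 := DualNumber (ZMod 4)

lemma notPrin : ¬ (Ideal.span ({(2 : R4), eps} : Set R4)).IsPrincipal := by
  rintro ⟨g, hg⟩
  have hg' : Ideal.span ({(2 : R4), eps} : Set R4) = Ideal.span {g} := hg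
  have h2 : (2 : R4) ∈ Ideal.span ({g} : Set R4) := by
    rw [← hg']; exact Ideal.subset_span (by simp)
  have he : (eps : R4) ∈ Ideal.span ({g} : Set R4) := by
    rw [← hg']; exact Ideal.subset_span (by simp)
  have hgmem : g ∈ Ideal.span ({(2 : R4), eps} : Set R4) := by
    rw [hg']; exact Ideal.mem_span_singleton_self g
  obtain ⟨x, hx⟩ := Ideal.mem_span_singleton'.mp h2
  obtain ⟨y, hy⟩ := Ideal.mem_span_singleton'.mp he
  obtain ⟨a, b, hab⟩ := Ideal.mem_span_pair.mp hgmem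
  have hx1 := congrArg TrivSqZeroExt.fst hx
  have hy1 := congrArg TrivSqZeroExt.fst hy
  have hy2 := congrArg TrivSqZeroExt.snd hy
  have hab1 := congrArg TrivSqZeroExt.fst hab
  simp [TrivSqZeroExt.fst_mul, TrivSqZeroExt.snd_mul, smul_eq_mul] at hx1 hy1 hy2 hab1
  have h2f : TrivSqZeroExt.fst (2 : R4) = 2 := rfl
  rw [h2f] at hx1 hab1
  revert hx1 hy1 hy2 hab1
  generalize TrivSqZeroExt.fst x = x1
  generalize TrivSqZeroExt.fst g = g1
  generalize TrivSqZeroExt.snd g = g2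
  generalize TrivSqZeroExt.fst y = y1
  generalize TrivSqZeroExt.snd y = y2
  generalize TrivSqZeroExt.fst a = a1
  revert x1 g1 g2 y1 y2 a1
  decide

/-- For odd `n`, the ring `R[x]/(xⁿ - 1)` with `R = ℤ₄[u]/(u²)` is not a
principal ideal ring: the preimage of the ideal `(2,u)` of `R` under the
augmentation homomorphism (sending a polynomial to the sum of its
coefficients, i.e. evaluation at `1`) is not principal. -/
theorem stmt10 (n : ℕ) (hpos : 0 < n) (hodd : Odd n) :
    ∃ γ : (Polynomial R4 ⧸ Ideal.span {(X : Polynomial R4) ^ n - 1}) →+* R4,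
      (∀ p : Polynomial R4,
        γ (Ideal.Quotient.mk (Ideal.span {(X : Polynomial R4) ^ n - 1}) p) = p.eval 1) ∧
      ¬ ((Ideal.span {(2 : R4), eps}).comap γ).IsPrincipal ∧
      ¬ IsPrincipalIdealRing (Polynomial R4 ⧸ Ideal.span {(X : Polynomial R4) ^ n - 1}) := by
  set I : Ideal (Polynomial R4) := Ideal.span {(X : Polynomial R4) ^ n - 1} with hI
  have hker : ∀ p ∈ I, (evalRingHom (1 : R4)) p = 0 := by
    intro p hp
    obtain ⟨c, rfl⟩ := Ideal.mem_span_singleton.mp hp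
    simp
  set γ := Ideal.Quotient.lift I (evalRingHom (1 : R4)) hker with hγ
  have hsurj : Function.Surjective γ := by
    intro r
    exact ⟨Ideal.Quotient.mk I (C r), by simp [hγ]⟩
  have hnp : ¬ ((Ideal.span {(2 : R4), eps}).comap γ).IsPrincipal := by
    rintro ⟨q, hq⟩
    apply notPrin
    refine ⟨γ q, ?_⟩
    have := Ideal.map_comap_of_surjective γ hsurj (Ideal.span {(2 : R4), eps})
    rw [← this, hq]
    show Ideal.map γ (Ideal.span {q}) = Ideal.span {γ q}
    rw [Ideal.map_span, Set.image_singleton]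
  exact ⟨γ, fun p => rfl, hnp, fun h => hnp (h.principal _)⟩
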